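/- Let Γ be a symmetric numerical semigroup with δ := #(ℕ∖Γ) ≥ 1, and take p = q = 1, a = 0. Then t_0 = 2δ−2, τ_0(2t) = t(t−2δ+1)/2 for 0 ≤ t ≤ 2δ−1, and r_0 = δ(δ−1); moreover there is an isomorphism of graded ℤ[U]-modules ℍ(R_{τ_0},χ_{τ_0})[δ(δ−1)] ≅ T⁺_0 ⊕ T_0(α_{δ−1}) ⊕ ⊕_{i=1}^{δ−1} T_{i(i+1)}(α_{δ−1+i})^{⊕2}, and the kernel of the U-action on this module is isomorphic to ⊕_{i=0}^{δ−1} ℤ_{(i²+i)}^{⊕2}, where ℤ_{(r)} denotes a rank-one free ℤ-module in degree r. -/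

import Mathlib

noncomputable section

/-- `T⁺₀ = ℤ[U,U⁻¹]/(U·ℤ[U])`, modeled as finitely supported functions `ℕ → ℤ`;
`Finsupp.single h 1` represents `U^{-h}`, which is homogeneous of degree `2h`. -/
abbrev TPlus : Type := ℕ →₀ ℤ

/-- The `U`-action on `T⁺₀`: `U · U^{-h} = U^{-(h-1)}` for `h ≥ 1`, `U · U^0 = 0`. -/
def shiftU : TPlus →ₗ[ℤ] TPlus where
  toFun f := Finsupp.comapDomain (· + 1) f (fun a _ b _ h => by simpa using h)
  map_add' f g := by
    ext h
    show (f + g) (h + 1) = f (h + 1) + g (h + 1)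
    simp
  map_smul' c f := by
    ext h
    show (c • f) (h + 1) = c * f (h + 1)
    simp

lemma shiftU_apply (f : TPlus) (h : ℕ) : shiftU f h = f (h + 1) := rfl

/-- The submodule `T₀(n) ⊂ T⁺₀` spanned by `U^{-h}`, `0 ≤ h ≤ n-1`. -/
def Tower (n : ℕ) : Submodule ℤ TPlus where
  carrier := {f | ∀ h, n ≤ h → f h = 0}
  add_mem' := by
    intro a b ha hb h hh
    simp [Finsupp.add_apply, ha h hh, hb h hh]
  zero_mem' := by intro h hh; rfl
  smul_mem' := by
    intro c f hf h hh
    simp [Finsupp.smul_apply, hf h hh]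

/-- Homogeneity of degree `d` in the shifted module `T⁺_r` or `T_r(n)`:
the coefficient of `U^{-h}` has degree `2h + r`. -/
def THomog (r d : ℚ) (f : TPlus) : Prop := ∀ h : ℕ, f h ≠ 0 → 2 * (h : ℚ) + r = d

/-- `ℍ(R,χ)` for a graph with vertex set `V`, adjacency `Adj` and grading `χ`:
functions `φ` from vertices to `T⁺₀` with `U · φ(v) = φ(w)` along edges with `χ v < χ w`. -/
def Hmod {V : Type} (Adj : V → V → Prop) (χ : V → ℤ) : Submodule ℤ (V → TPlus) where
  carrier := {φ | ∀ v w, Adj v w → χ v < χ w → shiftU (φ v) = φ w}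
  add_mem' := by
    intro a b ha hb v w hvw hχ
    simp only [Pi.add_apply, map_add, ha v w hvw hχ, hb v w hvw hχ]
  zero_mem' := by intro v w _ _; simp
  smul_mem' := by
    intro c f hf v w hvw hχ
    simp only [Pi.smul_apply, map_smul, hf v w hvw hχ]

lemma mem_Hmod {V : Type} {Adj : V → V → Prop} {χ : V → ℤ} {φ : V → TPlus} :
    φ ∈ Hmod Adj χ ↔ ∀ v w, Adj v w → χ v < χ w → shiftU (φ v) = φ w := Iff.rfl

/-- The (pointwise) `U`-action on `ℍ(R,χ)`. -/
def HU {V : Type} (Adj : V → V → Prop) (χ : V → ℤ) : Hmod Adj χ →ₗ[ℤ] Hmod Adj χ where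
  toFun φ := ⟨fun v => shiftU (φ.1 v), by
    intro v w hvw hχ
    show shiftU (shiftU (φ.1 v)) = shiftU (φ.1 w)
    rw [mem_Hmod.1 φ.2 v w hvw hχ]⟩
  map_add' a b := by
    apply Subtype.ext
    funext v
    simp
  map_smul' c a := by
    apply Subtype.ext
    funext v
    simp

/-- Homogeneity of degree `d` in the shifted module `ℍ(R,χ)[r]`:
`φ` is homogeneous of degree `d` if each `φ(v)` is homogeneous of degree `d - r - 2χ(v)`
in `T⁺₀`. -/
def HHomog {V : Type} (χ : V → ℤ) (r d : ℚ) (φ : V → TPlus) : Prop :=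
  ∀ v, THomog (2 * (χ v : ℚ) + r) d (φ v)

/-- The underlying module of a direct sum `T⁺ ⊕ ⊕_{i ∈ I} T(len i)`. -/
abbrev Targ {I : Type} (len : I → ℕ) : Type := TPlus × ((i : I) → Tower (len i))

def towerShift {n : ℕ} (f : Tower n) : Tower n :=
  ⟨shiftU f.1, by
    intro h hh
    rw [shiftU_apply]
    exact f.2 (h + 1) (by omega)⟩

/-- The `U`-action on `Targ len`. -/
def TargU {I : Type} (len : I → ℕ) : Targ len →ₗ[ℤ] Targ len where
  toFun x := (shiftU x.1, fun i => towerShift (x.2 i))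
  map_add' a b := by
    refine Prod.ext ?_ ?_
    · simp
    · funext i
      apply Subtype.ext
      simp [towerShift]
  map_smul' c a := by
    refine Prod.ext ?_ ?_
    · simp
    · funext i
      apply Subtype.ext
      simp [towerShift]

/-- Homogeneity of degree `d` in `T⁺_{r₀} ⊕ ⊕_{i ∈ I} T_{rI i}(len i)`. -/
def TargHomog {I : Type} {len : I → ℕ} (r₀ : ℚ) (rI : I → ℚ) (d : ℚ) (x : Targ len) : Prop :=
  THomog r₀ d x.1 ∧ ∀ i, THomog (rI i) d ((x.2 i) : TPlus)

end

noncomputable section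

/-- Pre-vertices of the graded root `R_τ` associated with `τ : {0,…,T₀} → ℤ`:
pairs `(i,k)` with `i ≤ T₀` and `τ i ≤ k`, representing the vertex `v_i^k`. -/
def RootVpre (T0 : ℕ) (τ : ℕ → ℤ) : Type := {x : ℕ × ℤ // x.1 ≤ T0 ∧ τ x.1 ≤ x.2}

/-- The identification `v_i^k ∼ v_j^k` whenever `k ≥ τ(l)` for every `l` between `i` and `j`. -/
def RootSetoid (T0 : ℕ) (τ : ℕ → ℤ) : Setoid (RootVpre T0 τ) where
  r x y := x.1.2 = y.1.2 ∧
    ∀ l : ℕ, ((x.1.1 ≤ l ∧ l ≤ y.1.1) ∨ (y.1.1 ≤ l ∧ l ≤ x.1.1)) → τ l ≤ x.1.2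
  iseqv := by
    constructor
    · intro x
      refine ⟨rfl, ?_⟩
      intro l hl
      have : l = x.1.1 := by omega
      rw [this]
      exact x.2.2
    · intro x y h
      refine ⟨h.1.symm, ?_⟩
      intro l hl
      rw [← h.1]
      exact h.2 l (by tauto)
    · intro x y z hxy hyz
      refine ⟨hxy.1.trans hyz.1, ?_⟩
      intro l hl
      have h2 := hxy.2
      have h3 := hyz.2
      rcases (by omega :
          ((x.1.1 ≤ l ∧ l ≤ y.1.1) ∨ (y.1.1 ≤ l ∧ l ≤ x.1.1)) ∨
          ((y.1.1 ≤ l ∧ l ≤ z.1.1) ∨ (z.1.1 ≤ l ∧ l ≤ y.1.1))) with h | h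
      · exact h2 l h
      · rw [hxy.1]
        exact h3 l h

/-- The vertex set of the graded root `R_τ`. -/
def RootV (T0 : ℕ) (τ : ℕ → ℤ) : Type := Quotient (RootSetoid T0 τ)

/-- The grading `χ_τ` of `R_τ`. -/
def rootχ (T0 : ℕ) (τ : ℕ → ℤ) : RootV T0 τ → ℤ :=
  Quotient.lift (fun x : RootVpre T0 τ => x.1.2) (fun _ _ h => h.1)

/-- The vertex `v_i^{k+1}` above `v_i^k`. -/
def rootStep (T0 : ℕ) (τ : ℕ → ℤ) (x : RootVpre T0 τ) : RootVpre T0 τ :=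
  ⟨(x.1.1, x.1.2 + 1), x.2.1, by show τ x.1.1 ≤ x.1.2 + 1; have := x.2.2; omega⟩

/-- The edges of `R_τ`: each `v_i^k` is connected with `v_i^{k+1}`. -/
def rootAdj (T0 : ℕ) (τ : ℕ → ℤ) (u v : RootV T0 τ) : Prop :=
  (∃ x, u = Quotient.mk (RootSetoid T0 τ) x ∧
        v = Quotient.mk (RootSetoid T0 τ) (rootStep T0 τ x)) ∨
  (∃ x, v = Quotient.mk (RootSetoid T0 τ) x ∧
        u = Quotient.mk (RootSetoid T0 τ) (rootStep T0 τ x))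

/-- A vertex of `R_τ` (given `i ≤ T₀` and `τ i ≤ k`). -/
def rootMk (T0 : ℕ) (τ : ℕ → ℤ) (i : ℕ) (k : ℤ) (hi : i ≤ T0) (hk : τ i ≤ k) :
    RootV T0 τ :=
  Quotient.mk (RootSetoid T0 τ) ⟨(i, k), hi, hk⟩

/-- A local minimum point of a χ-graded graph. -/
def IsLocMin {V : Type} (Adj : V → V → Prop) (χ : V → ℤ) (v : V) : Prop :=
  ∀ w, Adj v w → χ v < χ w

end

noncomputable section

/-- The delta-invariant `δ = #(ℕ∖Γ)` of a numerical semigroup `Γ`. -/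
def sdelta (Γ : Set ℕ) : ℕ := Γᶜ.ncard

/-- `α_i = #{k ∈ ℕ∖Γ : k > i}`. -/
def salpha (Γ : Set ℕ) (i : ℕ) : ℕ := {k : ℕ | k ∉ Γ ∧ i < k}.ncard

/-- `τ_a(2t) = t(1−δ) + Σ_{j=0}^{t−1} ⌊(jp+a)/q⌋`. -/
def tauEven (Γ : Set ℕ) (p q a : ℕ) (t : ℕ) : ℤ :=
  (t : ℤ) * (1 - (sdelta Γ : ℤ)) + ∑ j ∈ Finset.range t, (((j * p + a) / q : ℕ) : ℤ)

/-- The function `τ_a : {0,1,…,2t_a+2} → ℤ`: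
`τ_a(2t)` as above and `τ_a(2t+1) = τ_a(2t+2) + α_{⌊(tp+a)/q⌋}`. -/
def tauFun (Γ : Set ℕ) (p q a : ℕ) (n : ℕ) : ℤ :=
  if n % 2 = 0 then tauEven Γ p q a (n / 2)
  else tauEven Γ p q a (n / 2 + 1) + (salpha Γ ((n / 2 * p + a) / q) : ℤ)

/-- `t_a = ⌊((2δ−1)q − a − 1)/p⌋`. -/
def tA (Γ : Set ℕ) (p q a : ℕ) : ℤ :=
  ((2 * (sdelta Γ : ℤ) - 1) * (q : ℤ) - (a : ℤ) - 1) / (p : ℤ)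

/-- The length `T₀ = 2t_a + 2` of the domain of `τ_a`. -/
def rootT0 (Γ : Set ℕ) (p q a : ℕ) : ℕ := (2 * tA Γ p q a + 2).toNat

end

/-- The sawtooth function `((x))`. -/
noncomputable def sawtooth (x : ℚ) : ℚ :=
  if x = (⌊x⌋ : ℚ) then 0 else Int.fract x - 1 / 2

/-- The Dedekind sum `s(q,p) = Σ_{l=0}^{p−1} ((l/p))·((ql/p))`. -/
noncomputable def dedekindSum (q p : ℕ) : ℚ :=
  ∑ l ∈ Finset.range p, sawtooth ((l : ℚ) / p) * sawtooth ((q * l : ℚ) / p)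

/-!
The graded root of `τ₀` is a zigzag: its local minima are the `2δ` leaves `v_{2t}`, and an
element of `ℍ` is determined by its values `g_t` at the leaves, subject only to the relations
`U^{a_t} g_t = U^{b_t} g_{t+1}` imposed by the local maxima `v_{2t+1}` where neighbouring paths
meet. The leaf levels `τ₀(2t) = t(t - 2δ + 1)/2` decrease down to the leaf `δ - 1` and increase
after it, so each relation says that `g_t` minus a `U`-power of its neighbour nearer to `δ - 1`
lies in a tower `T(min(a_t, b_t))`. Hence `g ↦ (g_{δ-1}, these differences)` identifies `ℍ` with
`T⁺ ⊕ ⊕_t T(min(a_t, b_t))`. Here `b_t = α_t`, and `a_t = α_t + t + 1 - δ`; symmetry of `Γ`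
turns the latter into `α_{2δ-2-t}` for `t < δ - 1`, because `k ↦ 2δ - 1 - k` exchanges elements
and gaps of `Γ`. Finally `Ker U` consists of the functions supported on the leaves with values
in `ℤ·U⁰`, and these are unconstrained because all `a_t, b_t ≥ 1`.
-/

noncomputable section

lemma shiftU_pow_apply (m : ℕ) (f : TPlus) (h : ℕ) : (shiftU ^ m) f h = f (h + m) := by
  induction m generalizing h with
  | zero => rfl
  | succ m ih => rw [pow_succ', Module.End.mul_apply, shiftU_apply, ih, add_right_comm, add_assoc]

lemma shiftU_pow_shiftU (m : ℕ) (f : TPlus) :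
    (shiftU ^ m) (shiftU f) = shiftU ((shiftU ^ m) f) := by
  rw [← Module.End.mul_apply, ← pow_succ, pow_succ', Module.End.mul_apply]

lemma Tower_eq_ker (n : ℕ) : Tower n = LinearMap.ker (shiftU ^ n) := by
  ext f
  refine ⟨fun hf => ?_, fun hf h hh => ?_⟩
  · ext h
    simpa [shiftU_pow_apply] using hf (h + n) (Nat.le_add_left n h)
  · obtain ⟨h, rfl⟩ := Nat.exists_eq_add_of_le' hh
    simpa [shiftU_pow_apply] using DFunLike.congr_fun (LinearMap.mem_ker.1 hf) h

lemma shiftU_pow_eq_shiftU_pow_add_iff {a b : ℕ} {f g : TPlus} :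
    (shiftU ^ a) f = (shiftU ^ (a + b)) g ↔ f - (shiftU ^ b) g ∈ Tower a := by
  rw [Tower_eq_ker, LinearMap.mem_ker, map_sub, sub_eq_zero, pow_add, Module.End.mul_apply]

lemma mem_Tower_one_iff {f : TPlus} : f ∈ Tower 1 ↔ f = Finsupp.single 0 (f 0) := by
  refine ⟨fun hf => ?_, fun hf h hh => ?_⟩
  · ext h
    rcases h with _ | h
    · simp
    · simp [hf (h + 1) (by omega)]
  · rw [hf, Finsupp.single_eq_of_ne (by omega)]

lemma THomog.add {s d : ℚ} {f g : TPlus} (hf : THomog s d f) (hg : THomog s d g) :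
    THomog s d (f + g) := fun h hh => by
  by_cases hfh : f h = 0
  · exact hg h (by simpa [hfh] using hh)
  · exact hf h hfh

lemma THomog.neg {s d : ℚ} {f : TPlus} (hf : THomog s d f) : THomog s d (-f) :=
  fun h hh => hf h (by simpa using hh)

lemma THomog.sub {s d : ℚ} {f g : TPlus} (hf : THomog s d f) (hg : THomog s d g) :
    THomog s d (f - g) := sub_eq_add_neg f g ▸ hf.add hg.neg

lemma THomog.shiftU_pow {s d : ℚ} {f : TPlus} (hf : THomog s d f) (m : ℕ) :
    THomog (s + 2 * m) d ((shiftU ^ m) f) := fun h hh => by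
  rw [shiftU_pow_apply] at hh
  have := hf (h + m) hh
  push_cast at this
  linarith

lemma THomog.shiftU_pow_of_add_eq {a b : ℤ} {m : ℕ} {r d : ℚ} {f : TPlus} (h : a + m = b)
    (hf : THomog (2 * (a : ℚ) + r) d f) : THomog (2 * (b : ℚ) + r) d ((shiftU ^ m) f) := by
  convert hf.shiftU_pow m using 1
  rw [← h]
  push_cast
  ring

lemma THomog_iff_of_mem_Tower_one {s d : ℚ} {f : TPlus} (hf : f ∈ Tower 1) :
    THomog s d f ↔ (f 0 ≠ 0 → s = d) := by
  refine ⟨fun H h0 => by simpa using H 0 h0, fun H h hh => ?_⟩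
  rcases h with _ | h
  · simpa using H hh
  · exact absurd (hf (h + 1) (by omega)) hh

lemma shiftU_pow_mem_Tower {n : ℕ} {f : TPlus} (hf : f ∈ Tower n) (m : ℕ) :
    (shiftU ^ m) f ∈ Tower n := fun h hh => by
  rw [shiftU_pow_apply]
  exact hf (h + m) (by omega)

lemma mem_ker_HU_iff {V : Type} {Adj : V → V → Prop} {χ : V → ℤ} {φ : Hmod Adj χ} :
    φ ∈ LinearMap.ker (HU Adj χ) ↔ ∀ v, φ.1 v ∈ Tower 1 := by
  simp only [LinearMap.mem_ker, Tower_eq_ker, pow_one, Subtype.ext_iff, funext_iff]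
  rfl

section GradedRoot

variable {T0 : ℕ} {τ : ℕ → ℤ} {φ : RootV T0 τ → TPlus}

lemma rootMk_eq_rootMk_succ {i : ℕ} {k : ℤ} (hi : i + 1 ≤ T0) (hk : τ i ≤ k)
    (hk' : τ (i + 1) ≤ k) : rootMk T0 τ i k (by omega) hk = rootMk T0 τ (i + 1) k hi hk' :=
  Quotient.sound ⟨rfl, fun l (hl : (i ≤ l ∧ l ≤ i + 1) ∨ (i + 1 ≤ l ∧ l ≤ i)) => by
    obtain rfl | rfl : l = i ∨ l = i + 1 := by omega
    exacts [hk, hk']⟩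

lemma apply_rootMk_succ (hφ : φ ∈ Hmod (rootAdj T0 τ) (rootχ T0 τ)) {i : ℕ} {k : ℤ}
    (hi : i ≤ T0) (hk : τ i ≤ k) :
    φ (rootMk T0 τ i (k + 1) hi (by omega)) = shiftU (φ (rootMk T0 τ i k hi hk)) :=
  (hφ (rootMk T0 τ i k hi hk) _ (Or.inl ⟨_, rfl, rfl⟩) (lt_add_one k)).symm

lemma apply_rootMk_add (hφ : φ ∈ Hmod (rootAdj T0 τ) (rootχ T0 τ)) {i : ℕ} {k : ℤ}
    (hi : i ≤ T0) (hk : τ i ≤ k) (m : ℕ) :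
    φ (rootMk T0 τ i (k + m) hi (by omega)) = (shiftU ^ m) (φ (rootMk T0 τ i k hi hk)) := by
  induction m with
  | zero => simp
  | succ m ih =>
    rw [pow_succ', Module.End.mul_apply, ← ih, ← apply_rootMk_succ hφ hi]
    simp only [Nat.cast_succ, add_assoc]

lemma apply_rootMk_of_le (hφ : φ ∈ Hmod (rootAdj T0 τ) (rootχ T0 τ)) {i : ℕ} {k k' : ℤ}
    (hi : i ≤ T0) (hk : τ i ≤ k) (hkk' : k ≤ k') :
    φ (rootMk T0 τ i k' hi (hk.trans hkk')) =
      (shiftU ^ (k' - k).toNat) (φ (rootMk T0 τ i k hi hk)) := by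
  obtain ⟨m, rfl⟩ := Int.le.dest hkk'
  simpa using apply_rootMk_add hφ hi hk m

end GradedRoot

/-- `τ` has its local minima at the even and its local maxima at the odd points of
`{0, …, 2N}`, so that `R_τ` has the `N + 1` leaves `v_{2t}^{τ(2t)}`. -/
def IsZigzag (N : ℕ) (τ : ℕ → ℤ) : Prop :=
  ∀ t < N, τ (2 * t) ≤ τ (2 * t + 1) ∧ τ (2 * t + 2) ≤ τ (2 * t + 1)

/-- The leaf `v_{2t}^{τ(2t)}` of `R_τ`; a junk vertex for `t > N`. -/
def leaf (N : ℕ) (τ : ℕ → ℤ) (t : ℕ) : RootV (2 * N) τ :=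
  if h : t ≤ N then rootMk (2 * N) τ (2 * t) (τ (2 * t)) (by omega) le_rfl
  else rootMk (2 * N) τ 0 (τ 0) (Nat.zero_le _) le_rfl

/-- The relation between the values of an element of `ℍ` at two neighbouring leaves,
forced by the vertex where their paths meet. -/
def LeafCompatible (N : ℕ) (τ : ℕ → ℤ) (g : ℕ → TPlus) : Prop :=
  ∀ t < N, (shiftU ^ (τ (2 * t + 1) - τ (2 * t)).toNat) (g t) =
    (shiftU ^ (τ (2 * t + 1) - τ (2 * t + 2)).toNat) (g (t + 1))

/-- The value at `v_i^k` of the element of `ℍ` with leaf values `g`: the path of an odd `i`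
is glued to that of `i + 1`. -/
def leafExtension (τ : ℕ → ℤ) (g : ℕ → TPlus) (i : ℕ) (k : ℤ) : TPlus :=
  (shiftU ^ (k - τ (2 * ((i + 1) / 2))).toNat) (g ((i + 1) / 2))

lemma leaf_of_le {N t : ℕ} {τ : ℕ → ℤ} (h : t ≤ N) :
    leaf N τ t = rootMk (2 * N) τ (2 * t) (τ (2 * t)) (by omega) le_rfl := dif_pos h

lemma rootχ_leaf {N t : ℕ} {τ : ℕ → ℤ} (h : t ≤ N) :
    rootχ (2 * N) τ (leaf N τ t) = τ (2 * t) := by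
  rw [leaf_of_le h]
  rfl

namespace IsZigzag

variable {N : ℕ} {τ : ℕ → ℤ} (hz : IsZigzag N τ) {φ : RootV (2 * N) τ → TPlus}
include hz

lemma apply_rootMk (hφ : φ ∈ Hmod (rootAdj (2 * N) τ) (rootχ (2 * N) τ)) {i : ℕ} {k : ℤ}
    (hi : i ≤ 2 * N) (hk : τ i ≤ k) :
    φ (rootMk (2 * N) τ i k hi hk) = leafExtension τ (fun t => φ (leaf N τ t)) i k := by
  dsimp only [leafExtension]
  rcases Nat.even_or_odd' i with ⟨t, rfl | rfl⟩
  · rw [show (2 * t + 1) / 2 = t by omega, leaf_of_le (by omega)]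
    exact apply_rootMk_of_le hφ hi le_rfl hk
  · have hτ : τ (2 * t + 2) ≤ τ (2 * t + 1) := (hz t (by omega)).2
    rw [show (2 * t + 1 + 1) / 2 = t + 1 by omega, leaf_of_le (by omega),
      rootMk_eq_rootMk_succ (i := 2 * t + 1) (by omega) hk (hτ.trans hk)]
    exact apply_rootMk_of_le hφ _ le_rfl (hτ.trans hk)

lemma ext_leaf {ψ : RootV (2 * N) τ → TPlus}
    (hφ : φ ∈ Hmod (rootAdj (2 * N) τ) (rootχ (2 * N) τ))
    (hψ : ψ ∈ Hmod (rootAdj (2 * N) τ) (rootχ (2 * N) τ))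
    (h : ∀ t ≤ N, φ (leaf N τ t) = ψ (leaf N τ t)) : φ = ψ := by
  funext v
  induction v using Quotient.inductionOn with
  | h x =>
    obtain ⟨⟨i, k⟩, hi, hk⟩ := x
    change φ (rootMk _ τ i k hi hk) = ψ (rootMk _ τ i k hi hk)
    rw [hz.apply_rootMk hφ, hz.apply_rootMk hψ, leafExtension, leafExtension,
      h _ (by omega)]

lemma leafCompatible (hφ : φ ∈ Hmod (rootAdj (2 * N) τ) (rootχ (2 * N) τ)) :
    LeafCompatible N τ (fun t => φ (leaf N τ t)) := fun t ht => by
  have hτ := hz t ht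
  have hglue := rootMk_eq_rootMk_succ (T0 := 2 * N) (i := 2 * t) (by omega) hτ.1 le_rfl
  have hleft := apply_rootMk_of_le hφ (i := 2 * t) (by omega) le_rfl hτ.1
  have hright := hz.apply_rootMk hφ (i := 2 * t + 1) (by omega) le_rfl
  rw [hglue, hright, leafExtension, show (2 * t + 1 + 1) / 2 = t + 1 by omega,
    ← leaf_of_le ht.le] at hleft
  exact hleft.symm

lemma leafLevel_le {i : ℕ} {k : ℤ} (hi : i ≤ 2 * N) (hk : τ i ≤ k) :
    τ (2 * ((i + 1) / 2)) ≤ k := by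
  rcases Nat.even_or_odd' i with ⟨t, rfl | rfl⟩
  · rwa [show (2 * t + 1) / 2 = t by omega]
  · rw [show (2 * t + 1 + 1) / 2 = t + 1 by omega]
    exact (hz t (by omega)).2.trans hk

lemma leafExtension_succ {g : ℕ → TPlus} (hg : LeafCompatible N τ g) {i : ℕ} {k : ℤ}
    (hi : i + 1 ≤ 2 * N) (hk : τ i ≤ k) (hk' : τ (i + 1) ≤ k) :
    leafExtension τ g i k = leafExtension τ g (i + 1) k := by
  unfold leafExtension
  rcases Nat.even_or_odd' i with ⟨t, rfl | rfl⟩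
  · have hτ := hz t (by omega)
    rw [show (2 * t + 1) / 2 = t by omega, show (2 * t + 1 + 1) / 2 = t + 1 by omega,
      show (k - τ (2 * t)).toNat = (k - τ (2 * t + 1)).toNat + (τ (2 * t + 1) - τ (2 * t)).toNat
        by omega,
      show (k - τ (2 * (t + 1))).toNat
          = (k - τ (2 * t + 1)).toNat + (τ (2 * t + 1) - τ (2 * t + 2)).toNat by
        rw [show 2 * (t + 1) = 2 * t + 2 by ring]; omega,
      pow_add, pow_add, Module.End.mul_apply, Module.End.mul_apply, hg t (by omega)]
  · rw [show (2 * t + 1 + 1) / 2 = t + 1 by omega, show (2 * t + 1 + 1 + 1) / 2 = t + 1 by omega]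

lemma leafExtension_eq_of_le {g : ℕ → TPlus} (hg : LeafCompatible N τ g) {i j : ℕ} {k : ℤ}
    (hij : i ≤ j) (hj : j ≤ 2 * N) (h : ∀ l, i ≤ l → l ≤ j → τ l ≤ k) :
    leafExtension τ g i k = leafExtension τ g j k := by
  induction j, hij using Nat.le_induction with
  | base => rfl
  | succ j hij ih =>
    rw [ih (by omega) fun l hl hl' => h l hl (by omega),
      hz.leafExtension_succ hg hj (h j hij (by omega)) (h (j + 1) (by omega) le_rfl)]

def ofLeaves {g : ℕ → TPlus} (hg : LeafCompatible N τ g) : RootV (2 * N) τ → TPlus :=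
  Quotient.lift (fun x : RootVpre (2 * N) τ => leafExtension τ g x.1.1 x.1.2) <| by
    rintro ⟨⟨i, k⟩, hi, hk⟩ ⟨⟨j, k'⟩, hj, hk'⟩ ⟨rfl, h⟩
    rcases le_total i j with hij | hij
    · exact hz.leafExtension_eq_of_le hg hij hj fun l h1 h2 => h l (Or.inl ⟨h1, h2⟩)
    · exact (hz.leafExtension_eq_of_le hg hij hi fun l h1 h2 => h l (Or.inr ⟨h1, h2⟩)).symm

lemma ofLeaves_leaf {g : ℕ → TPlus} (hg : LeafCompatible N τ g) {t : ℕ} (ht : t ≤ N) :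
    hz.ofLeaves hg (leaf N τ t) = g t := by
  rw [leaf_of_le ht]
  change leafExtension τ g (2 * t) (τ (2 * t)) = g t
  simp [leafExtension, show (2 * t + 1) / 2 = t by omega]

lemma ofLeaves_mem {g : ℕ → TPlus} (hg : LeafCompatible N τ g) :
    hz.ofLeaves hg ∈ Hmod (rootAdj (2 * N) τ) (rootχ (2 * N) τ) := by
  rintro _ _ (⟨⟨⟨i, k⟩, hi, hk⟩, rfl, rfl⟩ | ⟨⟨⟨i, k⟩, hi, hk⟩, rfl, rfl⟩) hχ
  · have hlow := hz.leafLevel_le (i := i) (k := k) hi hk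
    change shiftU (leafExtension τ g i k) = leafExtension τ g i (k + 1)
    rw [leafExtension, leafExtension, ← Module.End.mul_apply, ← pow_succ',
      show (k + 1 - τ (2 * ((i + 1) / 2))).toNat = (k - τ (2 * ((i + 1) / 2))).toNat + 1 by omega]
  · exact absurd hχ (by change ¬k + 1 < k; omega)

lemma HHomog_iff (hφ : φ ∈ Hmod (rootAdj (2 * N) τ) (rootχ (2 * N) τ)) {r d : ℚ} :
    HHomog (rootχ (2 * N) τ) r d φ ↔
      ∀ t ≤ N, THomog (2 * (τ (2 * t) : ℚ) + r) d (φ (leaf N τ t)) := by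
  refine ⟨fun H t ht => by simpa [rootχ_leaf ht] using H (leaf N τ t), fun H v => ?_⟩
  induction v using Quotient.inductionOn with
  | h x =>
    obtain ⟨⟨i, k⟩, hi, hk⟩ := x
    change THomog (2 * (k : ℚ) + r) d (φ (rootMk _ τ i k hi hk))
    rw [hz.apply_rootMk hφ, leafExtension]
    have hlow := hz.leafLevel_le (i := i) (k := k) hi hk
    exact (H _ (by omega)).shiftU_pow_of_add_eq (by omega)

lemma apply_mem_Tower (hφ : φ ∈ Hmod (rootAdj (2 * N) τ) (rootχ (2 * N) τ)) {n : ℕ}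
    (h : ∀ t ≤ N, φ (leaf N τ t) ∈ Tower n) (v : RootV (2 * N) τ) : φ v ∈ Tower n := by
  induction v using Quotient.inductionOn with
  | h x =>
    obtain ⟨⟨i, k⟩, hi, hk⟩ := x
    change φ (rootMk _ τ i k hi hk) ∈ Tower n
    rw [hz.apply_rootMk hφ, leafExtension]
    exact shiftU_pow_mem_Tower (h _ (by omega)) _

end IsZigzag

lemma forall_le_of_outward {c N : ℕ} {P : ℕ → Prop} (base : P c)
    (down : ∀ t < c, P (t + 1) → P t) (up : ∀ t, c ≤ t → t < N → P t → P (t + 1)) :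
    ∀ t ≤ N, P t := by
  have below : ∀ n, P (c - n) := by
    intro n
    induction n with
    | zero => simpa using base
    | succ n ih =>
      rcases lt_or_ge n c with h | h
      · exact down _ (by omega) (by rwa [show c - (n + 1) + 1 = c - n by omega])
      · rwa [show c - (n + 1) = c - n by omega]
  have above : ∀ n, c + n ≤ N → P (c + n) := by
    intro n
    induction n with
    | zero => exact fun _ => by simpa using base
    | succ n ih => exact fun h => up (c + n) (by omega) (by omega) (ih (by omega))
  intro t ht
  rcases le_total t c with h | h
  · simpa [Nat.sub_sub_self h] using below (c - t)
  · obtain ⟨n, rfl⟩ := Nat.exists_eq_add_of_le h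
    exact above n ht

structure IsLeafValley (N : ℕ) (τ : ℕ → ℤ) (c : ℕ) : Prop where
  le : c ≤ N
  antitone : ∀ t < c, τ (2 * t + 2) ≤ τ (2 * t)
  monotone : ∀ t, c ≤ t → t < N → τ (2 * t) ≤ τ (2 * t + 2)

def edgeShift (τ : ℕ → ℤ) (t : ℕ) : ℕ := (τ (2 * t + 2) - τ (2 * t)).natAbs

/-- The length of the tower `T₀(·)` contributed by the `t`-th local maximum. -/
def towerLen (τ : ℕ → ℤ) (t : ℕ) : ℕ := (τ (2 * t + 1) - max (τ (2 * t)) (τ (2 * t + 2))).toNat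

/-- The coordinate of a sequence of leaf values along the `t`-th edge, read away from the
leaf `c`. -/
def edgeDiff (c : ℕ) (τ : ℕ → ℤ) (t : ℕ) : (ℕ → TPlus) →ₗ[ℤ] TPlus :=
  let leafAt (s : ℕ) : (ℕ → TPlus) →ₗ[ℤ] TPlus := LinearMap.proj s
  if t < c then leafAt t - (shiftU ^ edgeShift τ t) ∘ₗ leafAt (t + 1)
  else leafAt (t + 1) - (shiftU ^ edgeShift τ t) ∘ₗ leafAt t

section EdgeDiff

variable {c : ℕ} {τ : ℕ → ℤ}

lemma edgeDiff_of_lt {t : ℕ} (h : t < c) (g : ℕ → TPlus) :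
    edgeDiff c τ t g = g t - (shiftU ^ edgeShift τ t) (g (t + 1)) := by
  simp [edgeDiff, h]

lemma edgeDiff_of_le {t : ℕ} (h : c ≤ t) (g : ℕ → TPlus) :
    edgeDiff c τ t g = g (t + 1) - (shiftU ^ edgeShift τ t) (g t) := by
  simp [edgeDiff, not_lt.2 h]

lemma edgeDiff_shiftU (t : ℕ) (g : ℕ → TPlus) :
    edgeDiff c τ t (fun s => shiftU (g s)) = shiftU (edgeDiff c τ t g) := by
  rcases lt_or_ge t c with h | h
  · rw [edgeDiff_of_lt h, edgeDiff_of_lt h, map_sub, shiftU_pow_shiftU]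
  · rw [edgeDiff_of_le h, edgeDiff_of_le h, map_sub, shiftU_pow_shiftU]

lemma eq_zero_of_edgeDiff_eq_zero {N : ℕ} (hc : c ≤ N) {g : ℕ → TPlus} (h0 : g c = 0)
    (h : ∀ t < N, edgeDiff c τ t g = 0) : ∀ t ≤ N, g t = 0 := by
  refine forall_le_of_outward h0 (fun t ht ih => ?_) (fun t ht htN ih => ?_)
  · simpa [edgeDiff_of_lt ht, ih] using h t (by omega)
  · simpa [edgeDiff_of_le ht, ih] using h t htN

variable {N : ℕ}

lemma leafCompatible_iff (hv : IsLeafValley N τ c) (hz : IsZigzag N τ) {g : ℕ → TPlus} :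
    LeafCompatible N τ g ↔ ∀ t < N, edgeDiff c τ t g ∈ Tower (towerLen τ t) := by
  refine forall₂_congr fun t htN => ?_
  have hτ := hz t htN
  rcases lt_or_ge t c with h | h
  · have := hv.antitone t h
    rw [edgeDiff_of_lt h, ← shiftU_pow_eq_shiftU_pow_add_iff, towerLen, edgeShift]
    congr! 3 <;> omega
  · have := hv.monotone t h htN
    rw [edgeDiff_of_le h, ← shiftU_pow_eq_shiftU_pow_add_iff, eq_comm, towerLen, edgeShift]
    congr! 3 <;> omega

lemma forall_THomog_iff (hv : IsLeafValley N τ c) {g : ℕ → TPlus} {r d : ℚ} :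
    (∀ t ≤ N, THomog (2 * (τ (2 * t) : ℚ) + r) d (g t)) ↔
      THomog (2 * (τ (2 * c) : ℚ) + r) d (g c) ∧
        ∀ t < N, THomog (2 * ((max (τ (2 * t)) (τ (2 * t + 2)) : ℤ) : ℚ) + r) d
          (edgeDiff c τ t g) := by
  refine ⟨fun H => ⟨H c hv.le, fun t htN => ?_⟩, fun ⟨Hc, H⟩ => ?_⟩
  · have hnext := H (t + 1) htN
    rw [show 2 * (t + 1) = 2 * t + 2 by ring] at hnext
    rcases lt_or_ge t c with h | h
    · have := hv.antitone t h
      rw [edgeDiff_of_lt h, max_eq_left this]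
      exact (H t (by omega)).sub (hnext.shiftU_pow_of_add_eq (by rw [edgeShift]; omega))
    · have := hv.monotone t h htN
      rw [edgeDiff_of_le h, max_eq_right this]
      exact hnext.sub ((H t (by omega)).shiftU_pow_of_add_eq (by rw [edgeShift]; omega))
  · refine forall_le_of_outward Hc (fun t ht ih => ?_) (fun t ht htN ih => ?_)
    · have := hv.antitone t ht
      rw [show 2 * (t + 1) = 2 * t + 2 by ring] at ih
      have hD := H t (by have := hv.le; omega)
      rw [edgeDiff_of_lt ht, max_eq_left this] at hD
      simpa using hD.add (ih.shiftU_pow_of_add_eq (a := τ (2 * t + 2)) (b := τ (2 * t))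
        (m := edgeShift τ t) (by rw [edgeShift]; omega))
    · have := hv.monotone t ht htN
      rw [show 2 * (t + 1) = 2 * t + 2 by ring]
      have hD := H t htN
      rw [edgeDiff_of_le ht, max_eq_right this] at hD
      simpa using hD.add (ih.shiftU_pow_of_add_eq (a := τ (2 * t)) (b := τ (2 * t + 2))
        (m := edgeShift τ t) (by rw [edgeShift]; omega))

end EdgeDiff

/-- `leavesBelow c τ F D n` is the value at the leaf `c - n` of `leavesOfEdges c τ F D`. -/
def leavesBelow (c : ℕ) (τ : ℕ → ℤ) (F : TPlus) (D : ℕ → TPlus) : ℕ → TPlus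
  | 0 => F
  | n + 1 => D (c - (n + 1)) + (shiftU ^ edgeShift τ (c - (n + 1))) (leavesBelow c τ F D n)

/-- `leavesAbove c τ F D n` is the value at the leaf `c + n` of `leavesOfEdges c τ F D`. -/
def leavesAbove (c : ℕ) (τ : ℕ → ℤ) (F : TPlus) (D : ℕ → TPlus) : ℕ → TPlus
  | 0 => F
  | n + 1 => D (c + n) + (shiftU ^ edgeShift τ (c + n)) (leavesAbove c τ F D n)

def leavesOfEdges (c : ℕ) (τ : ℕ → ℤ) (F : TPlus) (D : ℕ → TPlus) (t : ℕ) : TPlus :=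
  if t ≤ c then leavesBelow c τ F D (c - t) else leavesAbove c τ F D (t - c)

section LeavesOfEdges

variable {c : ℕ} {τ : ℕ → ℤ} {F : TPlus} {D : ℕ → TPlus}

lemma leavesOfEdges_self : leavesOfEdges c τ F D c = F := by
  simp [leavesOfEdges, leavesBelow]

lemma leavesOfEdges_of_le {t : ℕ} (h : c ≤ t) :
    leavesOfEdges c τ F D t = leavesAbove c τ F D (t - c) := by
  unfold leavesOfEdges
  split_ifs with h'
  · rw [show t = c by omega, Nat.sub_self]
    rfl
  · rfl

lemma edgeDiff_leavesOfEdges (t : ℕ) : edgeDiff c τ t (leavesOfEdges c τ F D) = D t := by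
  rcases lt_or_ge t c with h | h
  · rw [edgeDiff_of_lt h, leavesOfEdges, leavesOfEdges, if_pos h.le,
      if_pos (show t + 1 ≤ c by omega), show c - t = c - (t + 1) + 1 by omega, leavesBelow, show c - (c - (t + 1) + 1) = t by omega,
      add_sub_cancel_right]
  · rw [edgeDiff_of_le h, leavesOfEdges_of_le h, leavesOfEdges_of_le (by omega : c ≤ t + 1),
      show t + 1 - c = t - c + 1 by omega, leavesAbove, show c + (t - c) = t by omega,
      add_sub_cancel_right]

end LeavesOfEdges

lemma edgeDiff_congr {c t : ℕ} {τ : ℕ → ℤ} {g g' : ℕ → TPlus} (h : g t = g' t)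
    (h' : g (t + 1) = g' (t + 1)) : edgeDiff c τ t g = edgeDiff c τ t g' := by
  rcases lt_or_ge t c with hc | hc
  · rw [edgeDiff_of_lt hc, edgeDiff_of_lt hc, h, h']
  · rw [edgeDiff_of_le hc, edgeDiff_of_le hc, h, h']

def leafValues (N : ℕ) (τ : ℕ → ℤ) :
    Hmod (rootAdj (2 * N) τ) (rootχ (2 * N) τ) →ₗ[ℤ] (ℕ → TPlus) :=
  LinearMap.pi fun t => (LinearMap.proj (leaf N τ t)).comp (Submodule.subtype _)

section TowerCoords

variable {N c : ℕ} {τ : ℕ → ℤ} (hz : IsZigzag N τ) (hv : IsLeafValley N τ c)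
  {I : Type} (e : I ≃ Fin N) {len : I → ℕ} (hlen : ∀ i, len i = towerLen τ (e i))
include hz hv hlen

lemma edgeDiff_leafValues_mem (φ : Hmod (rootAdj (2 * N) τ) (rootχ (2 * N) τ)) (i : I) :
    edgeDiff c τ (e i) (leafValues N τ φ) ∈ Tower (len i) :=
  hlen i ▸ (leafCompatible_iff hv hz).1 (hz.leafCompatible φ.2) (e i) (e i).2

def towerCoords : Hmod (rootAdj (2 * N) τ) (rootχ (2 * N) τ) →ₗ[ℤ] Targ len :=
  ((LinearMap.proj c).comp (leafValues N τ)).prod <| LinearMap.pi fun i =>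
    ((edgeDiff c τ (e i)).comp (leafValues N τ)).codRestrict (Tower (len i))
      (edgeDiff_leafValues_mem hz hv e hlen · i)

lemma towerCoords_snd (φ : Hmod (rootAdj (2 * N) τ) (rootχ (2 * N) τ)) (i : I) :
    ((towerCoords hz hv e hlen φ).2 i : TPlus) = edgeDiff c τ (e i) (leafValues N τ φ) := rfl

lemma towerCoords_injective : Function.Injective (towerCoords hz hv e hlen) := by
  refine (injective_iff_map_eq_zero _).2 fun φ hφ => ?_
  have hc : leafValues N τ φ c = 0 := congr_arg Prod.fst hφ
  have hedge : ∀ t < N, edgeDiff c τ t (leafValues N τ φ) = 0 := fun t ht => by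
    simpa [towerCoords_snd] using congr_arg (fun x => ((x.2 (e.symm ⟨t, ht⟩) : Tower _) : TPlus)) hφ
  have hleaves := eq_zero_of_edgeDiff_eq_zero hv.le hc hedge
  exact Subtype.ext (hz.ext_leaf φ.2 (zero_mem _) hleaves)

lemma towerCoords_surjective : Function.Surjective (towerCoords hz hv e hlen) := by
  rintro ⟨F, d⟩
  set D : ℕ → TPlus := fun t => if h : t < N then d (e.symm ⟨t, h⟩) else 0
  have hD : ∀ i, D (e i) = d i := fun i => by
    simpa [D] using congr_arg (fun j => (d j : TPlus)) (e.symm_apply_apply i)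
  have hg : LeafCompatible N τ (leavesOfEdges c τ F D) :=
    (leafCompatible_iff hv hz).2 fun t ht => by
      simpa [edgeDiff_leavesOfEdges, D, ht, hlen] using (d (e.symm ⟨t, ht⟩)).2
  have hleaves : ∀ t ≤ N, leafValues N τ ⟨_, hz.ofLeaves_mem hg⟩ t = leavesOfEdges c τ F D t :=
    fun t ht => hz.ofLeaves_leaf hg ht
  refine ⟨⟨_, hz.ofLeaves_mem hg⟩, Prod.ext ?_ (funext fun i => Subtype.ext ?_)⟩
  · exact (hleaves c hv.le).trans leavesOfEdges_self
  · change edgeDiff c τ (e i) (leafValues N τ _) = d i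
    rw [edgeDiff_congr (hleaves _ (e i).2.le) (hleaves _ (e i).2), edgeDiff_leavesOfEdges, hD]

lemma towerCoords_HU (φ : Hmod (rootAdj (2 * N) τ) (rootχ (2 * N) τ)) :
    towerCoords hz hv e hlen (HU _ _ φ) = TargU len (towerCoords hz hv e hlen φ) :=
  Prod.ext rfl <| funext fun i => Subtype.ext <| edgeDiff_shiftU (e i) (leafValues N τ φ)

lemma HHomog_iff_TargHomog_towerCoords (φ : Hmod (rootAdj (2 * N) τ) (rootχ (2 * N) τ))
    (r d : ℚ) :
    HHomog (rootχ (2 * N) τ) r d φ.1 ↔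
      TargHomog (2 * (τ (2 * c) : ℚ) + r)
        (fun i => 2 * ((max (τ (2 * e i)) (τ (2 * e i + 2)) : ℤ) : ℚ) + r) d
        (towerCoords hz hv e hlen φ) := by
  rw [hz.HHomog_iff φ.2, forall_THomog_iff hv, TargHomog]
  refine and_congr Iff.rfl ⟨fun H i => H _ (e i).2, fun H t ht => ?_⟩
  have := H (e.symm ⟨t, ht⟩)
  rw [towerCoords_snd, e.apply_symm_apply] at this
  exact this

end TowerCoords

theorem exists_linearEquiv_Targ {N c : ℕ} {τ : ℕ → ℤ} (hz : IsZigzag N τ)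
    (hv : IsLeafValley N τ c) {I : Type} (e : I ≃ Fin N) {len : I → ℕ}
    (hlen : ∀ i, len i = towerLen τ (e i)) {r r₀ : ℚ} {rI : I → ℚ}
    (hr₀ : r₀ = 2 * (τ (2 * c) : ℚ) + r)
    (hrI : ∀ i, rI i = 2 * ((max (τ (2 * e i)) (τ (2 * e i + 2)) : ℤ) : ℚ) + r) :
    ∃ E : Hmod (rootAdj (2 * N) τ) (rootχ (2 * N) τ) ≃ₗ[ℤ] Targ len,
      (∀ φ, E (HU _ _ φ) = TargU len (E φ)) ∧
        ∀ d φ, HHomog (rootχ (2 * N) τ) r d φ.1 ↔ TargHomog r₀ rI d (E φ) := by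
  obtain rfl := funext hrI
  subst hr₀
  exact ⟨LinearEquiv.ofBijective (towerCoords hz hv e hlen)
      ⟨towerCoords_injective hz hv e hlen, towerCoords_surjective hz hv e hlen⟩,
    towerCoords_HU hz hv e hlen, fun d φ => HHomog_iff_TargHomog_towerCoords hz hv e hlen φ r d⟩

def IsStrictZigzag (N : ℕ) (τ : ℕ → ℤ) : Prop :=
  ∀ t < N, τ (2 * t) < τ (2 * t + 1) ∧ τ (2 * t + 2) < τ (2 * t + 1)

lemma IsStrictZigzag.isZigzag {N : ℕ} {τ : ℕ → ℤ} (h : IsStrictZigzag N τ) : IsZigzag N τ :=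
  fun t ht => ⟨(h t ht).1.le, (h t ht).2.le⟩

lemma shiftU_pow_single_zero {m : ℕ} (hm : m ≠ 0) (z : ℤ) :
    (shiftU ^ m) (Finsupp.single 0 z) = 0 := by
  ext h
  simp [shiftU_pow_apply, show 0 ≠ h + m by omega]

section Kernel

variable {N : ℕ} {τ : ℕ → ℤ} (hs : IsStrictZigzag N τ) {J : Type} (e : J ≃ Fin (N + 1))

/-- An element of `Ker U` vanishes off the leaves and takes values in `ℤ·U⁰` there. -/
def kerCoords : LinearMap.ker (HU (rootAdj (2 * N) τ) (rootχ (2 * N) τ)) →ₗ[ℤ] (J → ℤ) :=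
  LinearMap.pi fun j => (Finsupp.lapply 0).comp <|
    (LinearMap.proj (e j : ℕ)).comp <| (leafValues N τ).comp (Submodule.subtype _)

lemma kerCoords_apply (x : LinearMap.ker (HU (rootAdj (2 * N) τ) (rootχ (2 * N) τ))) (j : J) :
    kerCoords e x j = x.1.1 (leaf N τ (e j)) 0 := rfl

include hs

lemma kerCoords_injective : Function.Injective (kerCoords (τ := τ) e) := by
  refine (injective_iff_map_eq_zero _).2 fun x hx => ?_
  have hleaves : ∀ t ≤ N, x.1.1 (leaf N τ t) = 0 := fun t ht => by
    have hcoord := congr_fun hx (e.symm ⟨t, by omega⟩)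
    rw [kerCoords_apply, e.apply_symm_apply] at hcoord
    rw [mem_Tower_one_iff.1 (mem_ker_HU_iff.1 x.2 _)]
    simpa using hcoord
  exact Subtype.ext <| Subtype.ext <| hs.isZigzag.ext_leaf x.1.2 (zero_mem _) hleaves

lemma kerCoords_surjective : Function.Surjective (kerCoords (τ := τ) e) := by
  intro a
  set g : ℕ → TPlus := fun t =>
    Finsupp.single 0 (if h : t ≤ N then a (e.symm ⟨t, by omega⟩) else 0)
  have hg : LeafCompatible N τ g := fun t ht => by
    rw [shiftU_pow_single_zero (by have := (hs t ht).1; omega),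
      shiftU_pow_single_zero (by have := (hs t ht).2; omega)]
  have hmem := hs.isZigzag.ofLeaves_mem hg
  have hker : (⟨_, hmem⟩ : Hmod _ _) ∈ LinearMap.ker (HU (rootAdj (2 * N) τ) (rootχ (2 * N) τ)) :=
    mem_ker_HU_iff.2 <| hs.isZigzag.apply_mem_Tower hmem fun t ht => by
      rw [hs.isZigzag.ofLeaves_leaf hg ht, mem_Tower_one_iff]
      simp [g]
  refine ⟨⟨_, hker⟩, funext fun j => ?_⟩
  rw [kerCoords_apply]
  change hs.isZigzag.ofLeaves hg (leaf N τ (e j)) 0 = a j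
  have hj : (e j : ℕ) ≤ N := Nat.le_of_lt_succ (e j).2
  simp [hs.isZigzag.ofLeaves_leaf hg hj, g, hj]

lemma HHomog_iff_kerCoords (x : LinearMap.ker (HU (rootAdj (2 * N) τ) (rootχ (2 * N) τ)))
    (r d : ℚ) :
    HHomog (rootχ (2 * N) τ) r d x.1.1 ↔
      ∀ j, kerCoords e x j ≠ 0 → d = 2 * (τ (2 * e j) : ℚ) + r := by
  have hTower := mem_ker_HU_iff.1 x.2
  simp only [hs.isZigzag.HHomog_iff x.1.2, THomog_iff_of_mem_Tower_one (hTower _),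
    kerCoords_apply, eq_comm (a := d)]
  refine ⟨fun H j => H _ (by omega), fun H t ht => ?_⟩
  simpa using H (e.symm ⟨t, by omega⟩)

end Kernel

theorem exists_linearEquiv_ker {N : ℕ} {τ : ℕ → ℤ} (hs : IsStrictZigzag N τ) {J : Type}
    (e : J ≃ Fin (N + 1)) {r : ℚ} {w : J → ℚ} (hw : ∀ j, w j = 2 * (τ (2 * e j) : ℚ) + r) :
    ∃ E : LinearMap.ker (HU (rootAdj (2 * N) τ) (rootχ (2 * N) τ)) ≃ₗ[ℤ] (J → ℤ),
      ∀ d x, HHomog (rootχ (2 * N) τ) r d x.1.1 ↔ ∀ j, E x j ≠ 0 → d = w j := by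
  obtain rfl := funext hw
  exact ⟨LinearEquiv.ofBijective (kerCoords e)
      ⟨kerCoords_injective hs e, kerCoords_surjective hs e⟩,
    fun d x => HHomog_iff_kerCoords hs e x r d⟩

section SymmetricSemigroup

variable {Γ : Set ℕ}

open Classical in
lemma salpha_eq_salpha_add_card (hfin : Γᶜ.Finite) {a b : ℕ} (hab : a ≤ b) :
    salpha Γ a = salpha Γ b + ((Finset.Ioc a b).filter (· ∉ Γ)).card := by
  have hsplit : {k | k ∉ Γ ∧ a < k} =
      {k | k ∉ Γ ∧ b < k} ∪ ↑((Finset.Ioc a b).filter (· ∉ Γ)) := by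
    ext k
    by_cases hk : k ∈ Γ <;> simp [hk]
    omega
  rw [salpha, salpha, hsplit, Set.ncard_union_eq _ (hfin.subset fun k hk => hk.1),
    Set.ncard_coe_finset]
  rw [Set.disjoint_left]
  simp only [Set.mem_ofPred_eq, Finset.coe_filter, Finset.mem_Ioc]
  omega

variable (hsym : ∀ k : ℕ, k ≤ 2 * sdelta Γ - 1 → (k ∈ Γ ↔ (2 * sdelta Γ - 1 - k) ∉ Γ))
include hsym

open Classical in
/-- `k ↦ 2δ - 1 - k` preserves the window `(δ - 1 - i, δ - 1 + i]` and swaps elements and gaps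
of `Γ` in it. -/
lemma card_gaps_Ioc {i : ℕ} (hi : i < sdelta Γ) :
    ((Finset.Ioc (sdelta Γ - 1 - i) (sdelta Γ - 1 + i)).filter (· ∉ Γ)).card = i := by
  set δ := sdelta Γ
  have hswap : ((Finset.Ioc (δ - 1 - i) (δ - 1 + i)).filter (· ∈ Γ)).card =
      ((Finset.Ioc (δ - 1 - i) (δ - 1 + i)).filter (· ∉ Γ)).card := by
    refine Finset.card_nbij' (2 * δ - 1 - ·) (2 * δ - 1 - ·) ?_ ?_ ?_ ?_ <;>
      intro k hk <;> simp only [Finset.coe_filter, Finset.mem_Ioc, Set.mem_ofPred_eq] at hk ⊢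
    · exact ⟨by omega, (hsym k (by omega)).1 hk.2⟩
    · refine ⟨by omega, ?_⟩
      have := hsym (2 * δ - 1 - k) (by omega)
      rw [Nat.sub_sub_self (by omega)] at this
      exact this.2 hk.2
    · omega
    · omega
  have htotal := Finset.card_filter_add_card_filter_not (s := Finset.Ioc (δ - 1 - i) (δ - 1 + i))
    (· ∈ Γ)
  rw [Nat.card_Ioc] at htotal
  omega

lemma salpha_eq_salpha_reflect_add (hfin : Γᶜ.Finite) {t : ℕ} (ht : t < sdelta Γ) :
    salpha Γ t = salpha Γ (2 * sdelta Γ - 2 - t) + (sdelta Γ - 1 - t) := by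
  have hcard := card_gaps_Ioc hsym (i := sdelta Γ - 1 - t) (by omega)
  rw [Nat.sub_sub_self (by omega),
    show sdelta Γ - 1 + (sdelta Γ - 1 - t) = 2 * sdelta Γ - 2 - t by omega] at hcard
  rw [salpha_eq_salpha_add_card hfin (show t ≤ 2 * sdelta Γ - 2 - t by omega), hcard]

lemma salpha_pos (h0 : 0 ∈ Γ) (hfin : Γᶜ.Finite) {t : ℕ} (ht : t < 2 * sdelta Γ - 1) :
    0 < salpha Γ t := by
  have hfrob : 2 * sdelta Γ - 1 ∉ Γ := by simpa using (hsym 0 (Nat.zero_le _)).1 h0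
  exact (Set.ncard_pos (hfin.subset fun k hk => hk.1)).2 ⟨_, hfrob, ht⟩

end SymmetricSemigroup

/-- The summand `T(α_{δ-1})` sits at the middle edge `δ - 1` of `R_{τ_0}`, the two copies of
`T(α_{δ+j})` at the edges `δ - 2 - j` and `δ + j`. -/
def edgeIndex (δ : ℕ) (hδ : 1 ≤ δ) : Unit ⊕ Fin (δ - 1) × Fin 2 ≃ Fin (2 * δ - 1) :=
  Equiv.ofBijective
    (Sum.elim (fun _ => ⟨δ - 1, by omega⟩)
      fun x => ⟨if x.2 = 0 then δ - 2 - x.1 else δ + x.1, by split_ifs <;> omega⟩) <|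
    (Fintype.bijective_iff_injective_and_card _).2 ⟨by
      rintro (_ | ⟨j, b⟩) (_ | ⟨j', b'⟩) h <;> have h' := congr_arg Fin.val h <;>
        simp only [Sum.elim_inl, Sum.elim_inr] at h'
      · rfl
      · split_ifs at h' <;> omega
      · split_ifs at h' <;> omega
      · have := b.2
        have := b'.2
        split_ifs at h' with h1 h2 h2 <;> simp only [Fin.ext_iff, Fin.val_zero] at h1 h2 <;>
          simp only [Sum.inr.injEq, Prod.mk.injEq, Fin.ext_iff] <;> omega,
      by simp; omega⟩

/-- The leaves `δ - 1 - j` and `δ + j` of `R_{τ_0}` are the two of weight `j² + j`. -/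
def leafIndex (δ : ℕ) (hδ : 1 ≤ δ) : Fin δ × Fin 2 ≃ Fin (2 * δ - 1 + 1) :=
  Equiv.ofBijective
    (fun x => ⟨if x.2 = 0 then δ - 1 - x.1 else δ + x.1, by split_ifs <;> omega⟩) <|
    (Fintype.bijective_iff_injective_and_card _).2 ⟨by
      rintro ⟨j, b⟩ ⟨j', b'⟩ h
      have h' := congr_arg Fin.val h
      have := b.2
      have := b'.2
      dsimp only at h'
      split_ifs at h' with h1 h2 h2 <;> simp only [Fin.ext_iff, Fin.val_zero] at h1 h2 <;>
        simp only [Prod.mk.injEq, Fin.ext_iff] <;> omega,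
      by simp; omega⟩

section MinusOneSurgery

variable {Γ : Set ℕ}

lemma tA_one_one_zero : tA Γ 1 1 0 = 2 * sdelta Γ - 2 := by
  simp only [tA, Nat.cast_one, Nat.cast_zero, mul_one, sub_zero, Int.ediv_one]
  ring

lemma rootT0_one_one_zero (hδ : 1 ≤ sdelta Γ) : rootT0 Γ 1 1 0 = 2 * (2 * sdelta Γ - 1) := by
  rw [rootT0, tA_one_one_zero]
  omega

lemma two_mul_tauFun_even (t : ℕ) :
    2 * tauFun Γ 1 1 0 (2 * t) = t * (t + 1 - 2 * sdelta Γ) := by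
  have hsum : 2 * ∑ j ∈ Finset.range t, (j : ℤ) = t * (t - 1) := by
    induction t with
    | zero => simp
    | succ t ih =>
      rw [Finset.sum_range_succ, mul_add, ih]
      push_cast
      ring
  simp only [tauFun, tauEven, Nat.mul_mod_right, if_pos, Nat.mul_div_cancel_left _ two_pos,
    mul_one, add_zero, Nat.div_one]
  linear_combination hsum

lemma tauFun_odd (t : ℕ) :
    tauFun Γ 1 1 0 (2 * t + 1) = tauFun Γ 1 1 0 (2 * t + 2) + salpha Γ t := by
  simp only [tauFun, show (2 * t + 1) % 2 = 1 by omega, show (2 * t + 2) % 2 = 0 by omega,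
    show (2 * t + 1) / 2 = t by omega, show (2 * t + 2) / 2 = t + 1 by omega, mul_one,
    add_zero, Nat.div_one, if_pos, one_ne_zero, if_false]

lemma tauFun_even_succ_sub (t : ℕ) :
    tauFun Γ 1 1 0 (2 * t + 2) - tauFun Γ 1 1 0 (2 * t) = t + 1 - sdelta Γ := by
  have h1 := two_mul_tauFun_even (Γ := Γ) t
  have h2 := two_mul_tauFun_even (Γ := Γ) (t + 1)
  rw [show 2 * (t + 1) = 2 * t + 2 by ring] at h2
  have : 2 * (tauFun Γ 1 1 0 (2 * t + 2) - tauFun Γ 1 1 0 (2 * t)) = 2 * (t + 1 - sdelta Γ) := by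
    push_cast at h2
    linear_combination h2 - h1
  omega

lemma two_mul_tauFun_even_add (s : ℕ) :
    2 * (tauFun Γ 1 1 0 (2 * s) : ℚ) + sdelta Γ * (sdelta Γ - 1) =
      (s - sdelta Γ) * (s - sdelta Γ + 1) := by
  have h : ((2 * tauFun Γ 1 1 0 (2 * s) : ℤ) : ℚ) = ((s * (s + 1 - 2 * sdelta Γ) : ℤ) : ℚ) := by
    rw [two_mul_tauFun_even]
  push_cast at h
  linear_combination h

lemma isLeafValley_tauFun (hδ : 1 ≤ sdelta Γ) :
    IsLeafValley (2 * sdelta Γ - 1) (tauFun Γ 1 1 0) (sdelta Γ - 1) where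
  le := by omega
  antitone t ht := by have := tauFun_even_succ_sub (Γ := Γ) t; omega
  monotone t ht _ := by have := tauFun_even_succ_sub (Γ := Γ) t; omega

lemma max_tauFun_even (t : ℕ) :
    max (tauFun Γ 1 1 0 (2 * t)) (tauFun Γ 1 1 0 (2 * t + 2)) =
      tauFun Γ 1 1 0 (2 * if t < sdelta Γ - 1 then t else t + 1) := by
  have := tauFun_even_succ_sub (Γ := Γ) t
  split_ifs with h
  · exact max_eq_left (by omega)
  · exact max_eq_right (by omega)

lemma degreeShift_edgeIndex (hδ : 1 ≤ sdelta Γ) (i : Unit ⊕ Fin (sdelta Γ - 1) × Fin 2) :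
    Sum.elim (fun _ : Unit => (0 : ℚ))
        (fun x : Fin (sdelta Γ - 1) × Fin 2 => ((x.1.val : ℚ) + 1) * ((x.1.val : ℚ) + 2)) i =
      2 * ((max (tauFun Γ 1 1 0 (2 * edgeIndex _ hδ i)) (tauFun Γ 1 1 0 (2 * edgeIndex _ hδ i + 2))
        : ℤ) : ℚ) + sdelta Γ * (sdelta Γ - 1) := by
  rw [max_tauFun_even, two_mul_tauFun_even_add]
  rcases i with _ | ⟨j, b⟩
  · simp [edgeIndex, Nat.cast_sub hδ]
  · have := j.2
    simp only [edgeIndex, Equiv.ofBijective_apply, Sum.elim_inr]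
    split_ifs with hb h
    · push_cast [Nat.cast_sub (show 2 ≤ sdelta Γ by omega),
        Nat.cast_sub (show j.val ≤ sdelta Γ - 2 by omega)]
      ring
    · omega
    · omega
    · push_cast
      ring

lemma degreeShift_leafIndex (hδ : 1 ≤ sdelta Γ) (x : Fin (sdelta Γ) × Fin 2) :
    (x.1.val : ℚ) ^ 2 + x.1.val =
      2 * (tauFun Γ 1 1 0 (2 * leafIndex _ hδ x) : ℚ) + sdelta Γ * (sdelta Γ - 1) := by
  rw [two_mul_tauFun_even_add]
  have := x.1.2
  simp only [leafIndex, Equiv.ofBijective_apply]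
  split_ifs
  · push_cast [Nat.cast_sub hδ, Nat.cast_sub (show x.1.val ≤ sdelta Γ - 1 by omega)]
    ring
  · push_cast
    ring

variable (h0 : 0 ∈ Γ) (hfin : Γᶜ.Finite)
  (hsym : ∀ k : ℕ, k ≤ 2 * sdelta Γ - 1 → (k ∈ Γ ↔ (2 * sdelta Γ - 1 - k) ∉ Γ))
include hfin hsym

include h0 in
lemma isStrictZigzag_tauFun : IsStrictZigzag (2 * sdelta Γ - 1) (tauFun Γ 1 1 0) := by
  intro t ht
  have hodd := tauFun_odd (Γ := Γ) t
  have hstep := tauFun_even_succ_sub (Γ := Γ) t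
  have hα := salpha_pos hsym h0 hfin ht
  refine ⟨?_, by omega⟩
  rcases le_or_gt (sdelta Γ - 1) t with h | h
  · omega
  · have := salpha_eq_salpha_reflect_add hsym hfin (t := t) (by omega)
    have := salpha_pos hsym h0 hfin (t := 2 * sdelta Γ - 2 - t) (by omega)
    omega

lemma towerLen_tauFun (t : ℕ) :
    towerLen (tauFun Γ 1 1 0) t = salpha Γ (max t (2 * sdelta Γ - 2 - t)) := by
  have hodd := tauFun_odd (Γ := Γ) t
  have hstep := tauFun_even_succ_sub (Γ := Γ) t
  rw [towerLen]
  rcases le_or_gt (sdelta Γ - 1) t with h | h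
  · rw [max_eq_left (a := t) (by omega)]
    omega
  · have := salpha_eq_salpha_reflect_add hsym hfin (t := t) (by omega)
    rw [max_eq_right (a := t) (by omega)]
    omega


lemma towerLen_edgeIndex (hδ : 1 ≤ sdelta Γ) (i : Unit ⊕ Fin (sdelta Γ - 1) × Fin 2) :
    Sum.elim (fun _ : Unit => salpha Γ (sdelta Γ - 1))
        (fun x : Fin (sdelta Γ - 1) × Fin 2 => salpha Γ (sdelta Γ + x.1.val)) i =
      towerLen (tauFun Γ 1 1 0) (edgeIndex _ hδ i) := by
  rw [towerLen_tauFun hfin hsym]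
  rcases i with _ | ⟨j, b⟩
  · simp only [edgeIndex, Equiv.ofBijective_apply, Sum.elim_inl]
    congr 1
    omega
  · have := j.2
    simp only [edgeIndex, Equiv.ofBijective_apply, Sum.elim_inr]
    congr 1
    split_ifs <;> omega

end MinusOneSurgery

end

theorem HF_of_minus_one_surgery_general
    (Γ : Set ℕ)
    (h0 : 0 ∈ Γ)
    (hfin : Γᶜ.Finite) (hδ1 : 1 ≤ sdelta Γ)
    (hsym : ∀ k : ℕ, k ≤ 2 * sdelta Γ - 1 → (k ∈ Γ ↔ (2 * sdelta Γ - 1 - k) ∉ Γ))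
    (τ : ℕ → ℤ) (hτ : τ = tauFun Γ 1 1 0)
    (T : ℕ) (hT : T = rootT0 Γ 1 1 0) :
    tA Γ 1 1 0 = 2 * (sdelta Γ : ℤ) - 2
      ∧ (∀ t : ℕ, t ≤ 2 * sdelta Γ - 1 →
          τ (2 * t) = (t : ℤ) * ((t : ℤ) - 2 * (sdelta Γ : ℤ) + 1) / 2)
      ∧ 3 * dedekindSum 1 1
            + 2 * (∑ j ∈ Finset.Icc (1 : ℕ) 0, Int.fract ((j : ℚ) * 1 / 1))
            - (1 + 2 * (0 : ℚ)) * ((1 : ℚ) - 1) / (2 * 1)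
            + (sdelta Γ : ℚ) * (1 - ((1 : ℚ) + 1) / 1)
            + (sdelta Γ : ℚ) ^ 2 * 1 / 1 - 2 * (sdelta Γ : ℚ) * 0 / 1
          = (sdelta Γ : ℚ) * ((sdelta Γ : ℚ) - 1)
      ∧ (∃ e : Hmod (rootAdj T τ) (rootχ T τ) ≃ₗ[ℤ]
            Targ (Sum.elim (fun _ : Unit => salpha Γ (sdelta Γ - 1))
              (fun x : Fin (sdelta Γ - 1) × Fin 2 => salpha Γ (sdelta Γ + x.1.val))),
          (∀ φ, e (HU (rootAdj T τ) (rootχ T τ) φ)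
              = TargU (Sum.elim (fun _ : Unit => salpha Γ (sdelta Γ - 1))
                  (fun x : Fin (sdelta Γ - 1) × Fin 2 => salpha Γ (sdelta Γ + x.1.val)))
                  (e φ))
          ∧ (∀ (d : ℚ) (φ : Hmod (rootAdj T τ) (rootχ T τ)),
              HHomog (rootχ T τ) ((sdelta Γ : ℚ) * ((sdelta Γ : ℚ) - 1)) d φ.1
                ↔ TargHomog 0
                    (Sum.elim (fun _ : Unit => (0 : ℚ))
                      (fun x : Fin (sdelta Γ - 1) × Fin 2 =>
                        ((x.1.val : ℚ) + 1) * ((x.1.val : ℚ) + 2)))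
                    d (e φ)))
      ∧ (∃ e2 : LinearMap.ker (HU (rootAdj T τ) (rootχ T τ)) ≃ₗ[ℤ]
            (Fin (sdelta Γ) × Fin 2 → ℤ),
          ∀ (d : ℚ) (x : LinearMap.ker (HU (rootAdj T τ) (rootχ T τ))),
            HHomog (rootχ T τ) ((sdelta Γ : ℚ) * ((sdelta Γ : ℚ) - 1)) d x.1.1
              ↔ ∀ ic : Fin (sdelta Γ) × Fin 2,
                  e2 x ic ≠ 0 → d = (ic.1.val : ℚ) ^ 2 + (ic.1.val : ℚ)) := by
  subst hτ
  obtain rfl : T = 2 * (2 * sdelta Γ - 1) := hT.trans (rootT0_one_one_zero hδ1)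
  have hzig := isStrictZigzag_tauFun h0 hfin hsym
  refine ⟨tA_one_one_zero, fun t _ => ?_, ?_, ?_, ?_⟩
  · rw [show (t : ℤ) * (t - 2 * sdelta Γ + 1) = 2 * tauFun Γ 1 1 0 (2 * t) by
      rw [two_mul_tauFun_even]; ring, Int.mul_ediv_cancel_left _ two_ne_zero]
  · norm_num [dedekindSum, sawtooth]
    ring
  · exact exists_linearEquiv_Targ hzig.isZigzag (isLeafValley_tauFun hδ1) (edgeIndex _ hδ1)
      (towerLen_edgeIndex hfin hsym hδ1) (by
        rw [two_mul_tauFun_even_add, Nat.cast_sub hδ1]; ring) (degreeShift_edgeIndex hδ1)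
  · exact exists_linearEquiv_ker hzig (leafIndex _ hδ1) (degreeShift_leafIndex hδ1)

/-- (Example 8.1 of the paper: `p = q = 1`, i.e. `(−1)`-surgery.)
`t_0 = 2δ−2`, `τ_0(2t) = t(t−2δ+1)/2`, `r_0 = δ(δ−1)`, and there are
isomorphisms of graded `ℤ[U]`-modules
`ℍ(R_{τ_0},χ_{τ_0})[δ(δ−1)] ≅ T⁺_0 ⊕ T_0(α_{δ−1}) ⊕ ⊕_{i=1}^{δ−1} T_{i(i+1)}(α_{δ−1+i})^{⊕2}`
and `Ker U ≅ ⊕_{i=0}^{δ−1} ℤ_{(i²+i)}^{⊕2}`. -/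
theorem HF_of_minus_one_surgery
    (Γ : Set ℕ)
    (h0 : 0 ∈ Γ) (hadd : ∀ x ∈ Γ, ∀ y ∈ Γ, x + y ∈ Γ)
    (hfin : Γᶜ.Finite) (hδ1 : 1 ≤ sdelta Γ)
    (hsym : ∀ k : ℕ, k ≤ 2 * sdelta Γ - 1 → (k ∈ Γ ↔ (2 * sdelta Γ - 1 - k) ∉ Γ))
    (τ : ℕ → ℤ) (hτ : τ = tauFun Γ 1 1 0)
    (T : ℕ) (hT : T = rootT0 Γ 1 1 0) :
    tA Γ 1 1 0 = 2 * (sdelta Γ : ℤ) - 2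
      ∧ (∀ t : ℕ, t ≤ 2 * sdelta Γ - 1 →
          τ (2 * t) = (t : ℤ) * ((t : ℤ) - 2 * (sdelta Γ : ℤ) + 1) / 2)
      ∧ 3 * dedekindSum 1 1
            + 2 * (∑ j ∈ Finset.Icc (1 : ℕ) 0, Int.fract ((j : ℚ) * 1 / 1))
            - (1 + 2 * (0 : ℚ)) * ((1 : ℚ) - 1) / (2 * 1)
            + (sdelta Γ : ℚ) * (1 - ((1 : ℚ) + 1) / 1)
            + (sdelta Γ : ℚ) ^ 2 * 1 / 1 - 2 * (sdelta Γ : ℚ) * 0 / 1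
          = (sdelta Γ : ℚ) * ((sdelta Γ : ℚ) - 1)
      ∧ (∃ e : Hmod (rootAdj T τ) (rootχ T τ) ≃ₗ[ℤ]
            Targ (Sum.elim (fun _ : Unit => salpha Γ (sdelta Γ - 1))
              (fun x : Fin (sdelta Γ - 1) × Fin 2 => salpha Γ (sdelta Γ + x.1.val))),
          (∀ φ, e (HU (rootAdj T τ) (rootχ T τ) φ)
              = TargU (Sum.elim (fun _ : Unit => salpha Γ (sdelta Γ - 1))
                  (fun x : Fin (sdelta Γ - 1) × Fin 2 => salpha Γ (sdelta Γ + x.1.val)))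
                  (e φ))
          ∧ (∀ (d : ℚ) (φ : Hmod (rootAdj T τ) (rootχ T τ)),
              HHomog (rootχ T τ) ((sdelta Γ : ℚ) * ((sdelta Γ : ℚ) - 1)) d φ.1
                ↔ TargHomog 0
                    (Sum.elim (fun _ : Unit => (0 : ℚ))
                      (fun x : Fin (sdelta Γ - 1) × Fin 2 =>
                        ((x.1.val : ℚ) + 1) * ((x.1.val : ℚ) + 2)))
                    d (e φ)))
      ∧ (∃ e2 : LinearMap.ker (HU (rootAdj T τ) (rootχ T τ)) ≃ₗ[ℤ]
            (Fin (sdelta Γ) × Fin 2 → ℤ),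
          ∀ (d : ℚ) (x : LinearMap.ker (HU (rootAdj T τ) (rootχ T τ))),
            HHomog (rootχ T τ) ((sdelta Γ : ℚ) * ((sdelta Γ : ℚ) - 1)) d x.1.1
              ↔ ∀ ic : Fin (sdelta Γ) × Fin 2,
                  e2 x ic ≠ 0 → d = (ic.1.val : ℚ) ^ 2 + (ic.1.val : ℚ)) :=
  HF_of_minus_one_surgery_general Γ h0 hfin hδ1 hsym τ hτ T hT
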